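/- The function NLD(x,y) = 2·LD(x,y)/(|x|+|y|+LD(x,y)) is a metric on nonempty strings; in particular it satisfies the triangle inequality NLD(x,y) + NLD(y,z) ≥ NLD(x,z). -/

import Mathlib

/-! Triangle inequality for `LD`: induction on the three strings along the dynamic-programming
recursion `levenshtein_cons_cons`, with `|y| ≤ |x| + LD x y` for the cases with an empty string.
For `NLD`, write `a = LD x y`, `b = LD y z`, `c = LD x z`. As `t ↦ t / (s + t)` is increasing
and `c ≤ a + b`, `c / (|x| + |z| + c) ≤ a / (|x| + |z| + a + b) + b / (|x| + |z| + a + b)`, and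
the two denominators only shrink on replacing `|z| + b`, resp. `|x| + a`, by `|y|`, since
`|y| ≤ |z| + b` and `|y| ≤ |x| + a`. -/
section LevenshteinDefs

namespace Levenshtein

structure Cost (α β δ : Type*) where
  delete : α → δ
  insert : β → δ
  substitute : α → β → δ

def defaultCost {α : Type*} [DecidableEq α] : Cost α α ℕ where
  delete _ := 1
  insert _ := 1
  substitute a b := if a = b then 0 else 1

def impl {α β δ : Type*} [AddZeroClass δ] [Min δ] (C : Cost α β δ)
    (xs : List α) (y : β) (d : {r : List δ // 0 < r.length}) :
    {r : List δ // 0 < r.length} :=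
  let ⟨ds, w⟩ := d
  xs.zip (ds.zip ds.tail) |>.foldr
    (init := ⟨[C.insert y + ds.getLast (List.length_pos_iff.mp w)], by simp⟩)
    (fun ⟨x, d₀, d₁⟩ ⟨r, w⟩ =>
      ⟨min (C.delete x + r[0]) (min (C.insert y + d₀) (C.substitute x y + d₁)) :: r, by simp⟩)

end Levenshtein

open Levenshtein in
def suffixLevenshtein {α β δ : Type*} [AddZeroClass δ] [Min δ] (C : Cost α β δ)
    (xs : List α) (ys : List β) : {r : List δ // 0 < r.length} :=
  ys.foldr
    (impl C xs)
    (xs.foldr (init := ⟨[0], by simp⟩) (fun a ⟨ds, w⟩ => ⟨(C.delete a + ds[0]) :: ds, by simp⟩))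

open Levenshtein in
def levenshtein {α β δ : Type*} [AddZeroClass δ] [Min δ] (C : Cost α β δ)
    (xs : List α) (ys : List β) : δ :=
  let ⟨r, w⟩ := suffixLevenshtein C xs ys
  r[0]

end LevenshteinDefs

variable {α : Type*} [Fintype α] [DecidableEq α]

/-- Levenshtein distance: the minimum number of single-character insertions,
deletions, and substitutions transforming one string into another. -/
def LD (x y : List α) : ℕ := levenshtein Levenshtein.defaultCost x y

/-- Normalized Levenshtein distance. -/
noncomputable def NLD (x y : List α) : ℝ :=
  2 * LD x y / (x.length + y.length + LD x y)

section

variable {α β δ : Type*} [AddZeroClass δ] [Min δ] (C : Levenshtein.Cost α β δ)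

namespace Levenshtein

theorem impl_nil_of_eq (y : β) {d : δ} {D : {r : List δ // 0 < r.length}} (h : D.1 = [d]) :
    (impl C [] y D).1 = [C.insert y + d] := by
  obtain ⟨_, _⟩ := D
  subst h
  rfl

theorem impl_cons_of_eq (x : α) (xs : List α) (y : β) {d : δ}
    {D' D : {r : List δ // 0 < r.length}} (h : D'.1 = d :: D.1) :
    (impl C (x :: xs) y D').1 =
      min (C.delete x + (impl C xs y D).1[0]'(impl C xs y D).2)
        (min (C.insert y + d) (C.substitute x y + D.1[0]'D.2)) :: (impl C xs y D).1 := by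
  obtain ⟨_, _⟩ := D'
  subst h
  obtain ⟨_ | ⟨e, es⟩, _⟩ := D
  · contradiction
  · rfl

end Levenshtein

open Levenshtein

theorem levenshtein_eq_head (xs : List α) (ys : List β) :
    levenshtein C xs ys = (suffixLevenshtein C xs ys).1[0]'(suffixLevenshtein C xs ys).2 :=
  rfl

theorem suffixLevenshtein_cons_right (xs : List α) (y : β) (ys : List β) :
    suffixLevenshtein C xs (y :: ys) = impl C xs y (suffixLevenshtein C xs ys) :=
  rfl

theorem suffixLevenshtein_nil_left (ys : List β) :
    (suffixLevenshtein C ([] : List α) ys).1 = [levenshtein C [] ys] := by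
  induction ys with
  | nil => rfl
  | cons y ys ih =>
    simp only [levenshtein_eq_head, suffixLevenshtein_cons_right, impl_nil_of_eq C y ih,
      List.getElem_cons_zero]

theorem suffixLevenshtein_cons_left (x : α) (xs : List α) (ys : List β) :
    (suffixLevenshtein C (x :: xs) ys).1 =
      levenshtein C (x :: xs) ys :: (suffixLevenshtein C xs ys).1 := by
  induction ys with
  | nil => rfl
  | cons y ys ih =>
    simp only [levenshtein_eq_head, suffixLevenshtein_cons_right, impl_cons_of_eq C x xs y ih,
      List.getElem_cons_zero]

theorem levenshtein_nil_cons (y : β) (ys : List β) :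
    levenshtein C ([] : List α) (y :: ys) = C.insert y + levenshtein C [] ys := by
  simp only [levenshtein_eq_head C [], suffixLevenshtein_cons_right,
    impl_nil_of_eq C y (suffixLevenshtein_nil_left C ys), List.getElem_cons_zero]

theorem levenshtein_cons_cons (x : α) (xs : List α) (y : β) (ys : List β) :
    levenshtein C (x :: xs) (y :: ys) =
      min (C.delete x + levenshtein C xs (y :: ys))
        (min (C.insert y + levenshtein C (x :: xs) ys)
          (C.substitute x y + levenshtein C xs ys)) := by
  rw [levenshtein_eq_head C (x :: xs)]
  simp only [suffixLevenshtein_cons_right,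
    impl_cons_of_eq C x xs y (suffixLevenshtein_cons_left C x xs ys), List.getElem_cons_zero]
  rfl

theorem levenshtein_cons_nil (x : α) (xs : List α) :
    levenshtein C (x :: xs) ([] : List β) = C.delete x + levenshtein C xs [] :=
  rfl

end

section

omit [Fintype α]

theorem LD_nil_left (y : List α) : LD [] y = y.length := by
  induction y with
  | nil => rfl
  | cons b ys ih =>
    simp only [LD, levenshtein_nil_cons, List.length_cons] at ih ⊢
    rw [ih]
    exact add_comm _ _

theorem LD_nil_right (x : List α) : LD x [] = x.length := by
  induction x with
  | nil => rfl
  | cons a xs ih =>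
    simp only [LD, levenshtein_cons_nil, List.length_cons] at ih ⊢
    rw [ih]
    exact add_comm _ _

theorem LD_cons_cons (a b : α) (xs ys : List α) :
    LD (a :: xs) (b :: ys) =
      min (1 + LD xs (b :: ys)) (min (1 + LD (a :: xs) ys) ((if a = b then 0 else 1) + LD xs ys)) :=
  levenshtein_cons_cons _ _ _ _ _

theorem LD_self (x : List α) : LD x x = 0 := by
  induction x with
  | nil => rfl
  | cons a xs ih => simp [LD_cons_cons, ih]

theorem LD_comm : ∀ x y : List α, LD x y = LD y x
  | [], y => by rw [LD_nil_left, LD_nil_right]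
  | a :: xs, [] => by rw [LD_nil_left, LD_nil_right]
  | a :: xs, b :: ys => by
    rw [LD_cons_cons, LD_cons_cons, LD_comm xs (b :: ys), LD_comm (a :: xs) ys, LD_comm xs ys]
    simp only [eq_comm (a := a)]
    omega
termination_by x y => x.length + y.length

theorem eq_of_LD_eq_zero : ∀ {x y : List α}, LD x y = 0 → x = y
  | [], [], _ => rfl
  | [], _ :: _, h => by simp [LD_nil_left] at h
  | _ :: _, [], h => by simp [LD_nil_right] at h
  | a :: xs, b :: ys, h => by
    rw [LD_cons_cons] at h
    by_cases hab : a = b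
    · rw [if_pos hab] at h
      rw [hab, eq_of_LD_eq_zero (x := xs) (y := ys) (by omega)]
    · rw [if_neg hab] at h
      omega

theorem length_le_length_add_LD : ∀ x y : List α, y.length ≤ x.length + LD x y
  | [], y => by rw [LD_nil_left]; omega
  | _ :: _, [] => by simp
  | a :: xs, b :: ys => by
    have h₁ := length_le_length_add_LD xs (b :: ys)
    have h₂ := length_le_length_add_LD (a :: xs) ys
    have h₃ := length_le_length_add_LD xs ys
    simp only [LD_cons_cons, List.length_cons] at *
    omega
termination_by x y => x.length + y.length

theorem LD_le_length_add_length : ∀ x y : List α, LD x y ≤ x.length + y.length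
  | [], y => by rw [LD_nil_left]; omega
  | x :: xs, [] => by rw [LD_nil_right]; omega
  | a :: xs, b :: ys => by
    have h := LD_le_length_add_length xs ys
    simp only [LD_cons_cons, List.length_cons]
    split_ifs <;> omega
termination_by x y => x.length + y.length

theorem LD_triangle : ∀ x y z : List α, LD x z ≤ LD x y + LD y z
  | [], y, z => by
    rw [LD_nil_left, LD_nil_left]
    exact length_le_length_add_LD y z
  | x :: xs, y, [] => by
    rw [LD_nil_right, LD_nil_right, LD_comm, add_comm]
    exact length_le_length_add_LD y _
  | x :: xs, [], z :: zs => by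
    rw [LD_nil_left, LD_nil_right]
    exact LD_le_length_add_length _ _
  | a :: xs, b :: ys, c :: zs => by
    have h₁ := LD_triangle xs (b :: ys) (c :: zs)
    have h₂ := LD_triangle (a :: xs) (b :: ys) zs
    have h₃ := LD_triangle (a :: xs) ys (c :: zs)
    have h₄ := LD_triangle (a :: xs) ys zs
    have h₅ := LD_triangle xs ys (c :: zs)
    have h₆ := LD_triangle xs ys zs
    simp only [LD_cons_cons] at *
    split_ifs at * <;> simp_all <;> omega
termination_by x y z => x.length + y.length + z.length
decreasing_by all_goals (simp only [List.length_cons]; omega)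

theorem div_add_self_mono {s t t' : ℝ} (hs : 0 ≤ s) (ht : 0 ≤ t) (htt' : t ≤ t') :
    t / (s + t) ≤ t' / (s + t') := by
  rcases ht.eq_or_lt with rfl | ht
  · simp only [zero_div]
    positivity
  · rw [div_le_div_iff₀ (by positivity) (by linarith)]
    nlinarith

theorem div_le_div_add_self {s t u : ℝ} (hs : 0 ≤ s) (ht : 0 ≤ t) (hu : s + t ≤ u) :
    t / u ≤ t / (s + t) := by
  rcases ht.eq_or_lt with rfl | ht
  · simp
  · exact div_le_div_of_nonneg_left ht.le (by positivity) hu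

theorem div_add_self_triangle {m n p a b c : ℝ} (hm : 0 ≤ m) (hn : 0 ≤ n) (hp : 0 ≤ p)
    (ha : 0 ≤ a) (hb : 0 ≤ b) (hc : 0 ≤ c) (hcab : c ≤ a + b) (hna : n ≤ m + a)
    (hnb : n ≤ p + b) :
    c / (m + p + c) ≤ a / (m + n + a) + b / (n + p + b) :=
  calc c / (m + p + c)
      ≤ (a + b) / (m + p + (a + b)) := div_add_self_mono (by positivity) hc hcab
    _ = a / (m + p + (a + b)) + b / (m + p + (a + b)) := add_div _ _ _
    _ ≤ a / (m + n + a) + b / (n + p + b) :=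
      add_le_add (div_le_div_add_self (by positivity) ha (by linarith))
        (div_le_div_add_self (by positivity) hb (by linarith))

theorem NLD_self (x : List α) : NLD x x = 0 := by
  simp [NLD, LD_self]

theorem NLD_comm (x y : List α) : NLD x y = NLD y x := by
  rw [NLD, NLD, LD_comm, add_comm (x.length : ℝ)]

theorem eq_of_NLD_eq_zero {x y : List α} (h : NLD x y = 0) : x = y := by
  rcases div_eq_zero_iff.mp h with hLD | hlen
  · exact eq_of_LD_eq_zero (by simpa using hLD)
  · have hlen : x.length + y.length + LD x y = 0 := by exact_mod_cast hlen
    rw [List.length_eq_zero_iff.mp (by omega : x.length = 0),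
      List.length_eq_zero_iff.mp (by omega : y.length = 0)]

theorem NLD_triangle (x y z : List α) : NLD x z ≤ NLD x y + NLD y z := by
  simp only [NLD, mul_div_assoc, ← mul_add]
  gcongr
  exact div_add_self_triangle (by positivity) (by positivity) (by positivity) (by positivity)
    (by positivity) (by positivity) (by exact_mod_cast LD_triangle x y z)
    (by exact_mod_cast length_le_length_add_LD x y)
    (by rw [LD_comm]; exact_mod_cast length_le_length_add_LD z y)

end

theorem NLD_isMetric_general (x y z : List α) :
    NLD x x = 0 ∧ (NLD x y = 0 → x = y) ∧ NLD x y = NLD y x ∧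
    NLD x z ≤ NLD x y + NLD y z :=
  ⟨NLD_self x, eq_of_NLD_eq_zero, NLD_comm x y, NLD_triangle x y z⟩

theorem NLD_isMetric (x y z : List α) (hx : x ≠ []) (hy : y ≠ []) (hz : z ≠ []) :
    NLD x x = 0 ∧ (NLD x y = 0 → x = y) ∧ NLD x y = NLD y x ∧
    NLD x z ≤ NLD x y + NLD y z :=
  NLD_isMetric_general x y z
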